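/- For L > 0 let pD(L,t,x,y) := (2/L)·∑_{k=1}^∞ e^{-k²π²t/L²}·sin(kπx/L)·sin(kπy/L). Then for every real J > 0, setting L = π/J, for every t > 0 and all real numbers x, y, y' one has |pD(L,t,x,y) − pD(L,t,x,y')| ≤ (2/π)·(J² + 1/(2t))·e^{-J² t}·|y − y'|. -/

import Mathlib

/-!
With `a = J²t`, the kernel at `L = π/J` is `(2J/π) ∑_{k≥1} e^{-k²a} sin(kJx) sin(kJy)`, and
`|sin(kJy) - sin(kJy')| ≤ kJ|y - y'|` reduces the claim to
`∑_{k≥1} k e^{-k²a} ≤ (1 + 1/(2a)) e^{-a}`.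
The term `k = 1` gives `e^{-a}`. Since `sinh u ≥ u`, the terms telescope:
`k e^{-k²a} ≤ (e^{-ak(k-1)} - e^{-ak(k+1)}) / (2a)`, so the terms `k ≥ 2` add up to at most
`e^{-2a}/(2a) ≤ e^{-a}/(2a)`.
-/

open Real

/-- The Dirichlet heat kernel on the interval `[0,L]`,
`pD(L,t,x,y) = (2/L)·∑_{k=1}^∞ e^{-k²π²t/L²}·sin(kπx/L)·sin(kπy/L)`. -/
noncomputable def dirichletHeatKernel (L t x y : ℝ) : ℝ :=
  (2 / L) * ∑' k : ℕ, Real.exp (-((k : ℝ) + 1) ^ 2 * π ^ 2 * t / L ^ 2) *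
    Real.sin (((k : ℝ) + 1) * π * x / L) * Real.sin (((k : ℝ) + 1) * π * y / L)

open Finset

lemma sum_range_le_of_le_sub_succ {f g : ℕ → ℝ} (hg : ∀ n, 0 ≤ g n)
    (h : ∀ n, f n ≤ g n - g (n + 1)) (N : ℕ) : ∑ n ∈ range N, f n ≤ g 0 :=
  calc ∑ n ∈ range N, f n ≤ ∑ n ∈ range N, (g n - g (n + 1)) := sum_le_sum fun n _ => h n
    _ = g 0 - g N := sum_range_sub' g N
    _ ≤ g 0 := sub_le_self _ (hg N)

lemma summable_of_le_sub_succ {f g : ℕ → ℝ} (hf : ∀ n, 0 ≤ f n) (hg : ∀ n, 0 ≤ g n)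
    (h : ∀ n, f n ≤ g n - g (n + 1)) : Summable f :=
  summable_of_sum_range_le hf (sum_range_le_of_le_sub_succ hg h)

lemma tsum_le_of_le_sub_succ {f g : ℕ → ℝ} (hf : ∀ n, 0 ≤ f n) (hg : ∀ n, 0 ≤ g n)
    (h : ∀ n, f n ≤ g n - g (n + 1)) : ∑' n, f n ≤ g 0 :=
  Real.tsum_le_of_sum_range_le hf (sum_range_le_of_le_sub_succ hg h)

lemma mul_exp_neg_sq_mul_le {a n : ℝ} (ha : 0 < a) (hn : 0 ≤ n) :
    n * exp (-n ^ 2 * a) ≤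
      exp (-a * (n * (n - 1))) / (2 * a) - exp (-a * ((n + 1) * (n + 1 - 1))) / (2 * a) := by
  have hsinh : 2 * (a * n) ≤ exp (a * n) - exp (-(a * n)) := by
    have := Real.self_le_sinh_iff.mpr (by positivity : 0 ≤ a * n)
    rw [Real.sinh_eq] at this
    linarith
  have hsplit : exp (-a * (n * (n - 1))) - exp (-a * ((n + 1) * (n + 1 - 1))) =
      exp (-n ^ 2 * a) * (exp (a * n) - exp (-(a * n))) := by
    rw [mul_sub (exp _), ← exp_add, ← exp_add]
    ring_nf
  rw [← sub_div, hsplit, le_div_iff₀ (by positivity)]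
  nlinarith [mul_le_mul_of_nonneg_left hsinh (exp_pos (-n ^ 2 * a)).le]

theorem summable_succ_mul_exp_neg_sq {a : ℝ} (ha : 0 < a) :
    Summable fun k : ℕ => ((k : ℝ) + 1) * exp (-((k : ℝ) + 1) ^ 2 * a) :=
  summable_of_le_sub_succ
    (g := fun k => exp (-a * (((k : ℝ) + 1) * ((k : ℝ) + 1 - 1))) / (2 * a))
    (fun k => by positivity) (fun k => by positivity) fun k => by
      simpa only [Nat.cast_add_one] using
        mul_exp_neg_sq_mul_le ha (n := (k : ℝ) + 1) (by positivity)

theorem tsum_succ_mul_exp_neg_sq_le {a : ℝ} (ha : 0 < a) :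
    ∑' k : ℕ, ((k : ℝ) + 1) * exp (-((k : ℝ) + 1) ^ 2 * a) ≤
      (1 + 1 / (2 * a)) * exp (-a) := by
  set G : ℝ → ℝ := fun n => exp (-a * (n * (n - 1))) / (2 * a)
  have hG : ∀ n, 0 ≤ G n := fun n => by positivity
  have htail : ∑' k : ℕ, (((k + 1 : ℕ) : ℝ) + 1) *
      exp (-(((k + 1 : ℕ) : ℝ) + 1) ^ 2 * a) ≤ G 2 := by
    have := tsum_le_of_le_sub_succ (g := fun k => G ((k : ℝ) + 2))
      (f := fun k : ℕ => ((k : ℝ) + 2) * exp (-((k : ℝ) + 2) ^ 2 * a))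
      (fun k => by positivity) (fun k => hG _) fun k => by
        simpa only [Nat.cast_add_one, add_right_comm _ (1 : ℝ) 2] using
          mul_exp_neg_sq_mul_le ha (n := (k : ℝ) + 2) (by positivity)
    simpa only [Nat.cast_add_one, add_assoc, one_add_one_eq_two, Nat.cast_zero, zero_add]
      using this
  have hG2 : G 2 ≤ exp (-a) / (2 * a) := by
    simp only [G]
    gcongr
    nlinarith
  rw [(summable_succ_mul_exp_neg_sq ha).tsum_eq_zero_add]
  simp only [Nat.cast_zero, zero_add, one_pow, neg_mul, one_mul] at htail ⊢
  linarith [show (1 + 1 / (2 * a)) * exp (-a) = exp (-a) + exp (-a) / (2 * a) by ring]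

lemma abs_mul_sin_mul_sin_le {c n : ℝ} (hc : 0 ≤ c) (hn : 1 ≤ n) (u v : ℝ) :
    |c * sin (n * u) * sin (n * v)| ≤ n * c := by
  rw [abs_mul, abs_mul, abs_of_nonneg hc]
  have := mul_le_mul (abs_sin_le_one (n * u)) (abs_sin_le_one (n * v)) (abs_nonneg _) zero_le_one
  nlinarith

lemma abs_mul_sin_mul_sin_sub_le {c n : ℝ} (hc : 0 ≤ c) (hn : 0 ≤ n) (u v v' : ℝ) :
    |c * sin (n * u) * sin (n * v) - c * sin (n * u) * sin (n * v')| ≤ n * c * |v - v'| :=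
  calc |c * sin (n * u) * sin (n * v) - c * sin (n * u) * sin (n * v')|
      = c * |sin (n * u)| * |sin (n * v) - sin (n * v')| := by
        rw [← mul_sub, abs_mul, abs_mul, abs_of_nonneg hc]
    _ ≤ c * 1 * |n * v - n * v'| := by
        gcongr c * ?_ * ?_
        exacts [abs_sin_le_one _, Real.abs_sin_sub_sin_le _ _]
    _ = n * c * |v - v'| := by rw [← mul_sub, abs_mul, abs_of_nonneg hn]; ring

noncomputable def heatSineSeries (a u v : ℝ) : ℝ :=
  ∑' k : ℕ,
    exp (-((k : ℝ) + 1) ^ 2 * a) * sin (((k : ℝ) + 1) * u) * sin (((k : ℝ) + 1) * v)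

theorem dirichletHeatKernel_eq_heatSineSeries (L t x y : ℝ) :
    dirichletHeatKernel L t x y =
      2 / L * heatSineSeries (π ^ 2 * t / L ^ 2) (π * x / L) (π * y / L) := by
  unfold dirichletHeatKernel heatSineSeries
  congr 1
  refine tsum_congr fun k => ?_
  ring_nf

theorem abs_heatSineSeries_sub_le {a : ℝ} (ha : 0 < a) (u v v' : ℝ) :
    |heatSineSeries a u v - heatSineSeries a u v'| ≤ (1 + 1 / (2 * a)) * exp (-a) * |v - v'| := by
  set b : ℕ → ℝ := fun k => ((k : ℝ) + 1) * exp (-((k : ℝ) + 1) ^ 2 * a)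
  have hb : Summable b := summable_succ_mul_exp_neg_sq ha
  set term : ℝ → ℕ → ℝ := fun w k =>
    exp (-((k : ℝ) + 1) ^ 2 * a) * sin (((k : ℝ) + 1) * u) * sin (((k : ℝ) + 1) * w)
  have hterm : ∀ w, Summable (term w) := fun w =>
    .of_norm_bounded hb fun k => abs_mul_sin_mul_sin_le (exp_pos _).le (by simp) _ _
  have hdiff : ∀ k, ‖term v k - term v' k‖ ≤ b k * |v - v'| := fun k =>
    abs_mul_sin_mul_sin_sub_le (exp_pos _).le (by positivity) _ _ _
  calc |heatSineSeries a u v - heatSineSeries a u v'|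
      = ‖∑' k, (term v k - term v' k)‖ := by
        rw [(hterm v).tsum_sub (hterm v'), Real.norm_eq_abs]; rfl
    _ ≤ (∑' k, b k) * |v - v'| :=
        (tsum_of_norm_bounded (hb.mul_right _).hasSum hdiff).trans_eq tsum_mul_right
    _ ≤ (1 + 1 / (2 * a)) * exp (-a) * |v - v'| := by
        gcongr
        exact tsum_succ_mul_exp_neg_sq_le ha

/-- Lipschitz estimate for the Dirichlet interval heat kernel: for every `J > 0`,
with `L = π/J`, every `t > 0` and all `x, y, y' ∈ ℝ`,
`|pD(L,t,x,y) − pD(L,t,x,y')| ≤ (2/π)·(J² + 1/(2t))·e^{-J² t}·|y − y'|`. -/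
theorem dirichletHeatKernel_lipschitz (J t x y y' : ℝ) (hJ : 0 < J) (ht : 0 < t) :
    |dirichletHeatKernel (π / J) t x y - dirichletHeatKernel (π / J) t x y'| ≤
      (2 / π) * (J ^ 2 + 1 / (2 * t)) * Real.exp (-J ^ 2 * t) * |y - y'| := by
  have hscale : ∀ w, π * w / (π / J) = J * w := fun w => by field_simp
  have htime : π ^ 2 * t / (π / J) ^ 2 = J ^ 2 * t := by field_simp
  simp only [dirichletHeatKernel_eq_heatSineSeries, hscale, htime, ← mul_sub, abs_mul,
    abs_of_pos (div_pos two_pos (div_pos pi_pos hJ))]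
  calc 2 / (π / J) * |heatSineSeries (J ^ 2 * t) (J * x) (J * y) -
        heatSineSeries (J ^ 2 * t) (J * x) (J * y')|
      ≤ 2 / (π / J) * ((1 + 1 / (2 * (J ^ 2 * t))) * exp (-(J ^ 2 * t)) * |J * y - J * y'|) := by
        gcongr
        exact abs_heatSineSeries_sub_le (by positivity) _ _ _
    _ = (2 / π) * (J ^ 2 + 1 / (2 * t)) * Real.exp (-J ^ 2 * t) * |y - y'| := by
        rw [← mul_sub, abs_mul, abs_of_pos hJ, neg_mul]
        field_simp
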